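/- arXiv:2502.20702 — 3 statements merged into one kernel-verified Lean document; each statement's English description precedes it below -/
import Mathlib

section
/- Let A, B be finite sets in an abelian group G with |A| ≥ |B| ≥ 1 and E(A,B) = |A||B|²/K for some real K ≥ 1. Then there exists a finite set X ⊆ G with |A|/(4K|B|) ≤ |X| ≤ 2K|A|/|B| and |A ∩ (B+X)| ≥ |A|/(4K). -/
open Finset Pointwise

/-- Common additive energy: quadruples (a₁,a₂,b₁,b₂) ∈ A×A×B×B with a₁ - b₁ = a₂ - b₂. -/
def addE {G : Type*} [AddCommGroup G] [DecidableEq G] (A B : Finset G) : ℕ :=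
  (((A ×ˢ A) ×ˢ B ×ˢ B).filter fun x => x.1.1 - x.2.1 = x.1.2 - x.2.2).card

section Aux
variable {G : Type*} [AddCommGroup G] [DecidableEq G]

lemma mem_add_single {B : Finset G} {d x : G} : x ∈ B + {d} ↔ x - d ∈ B := by
  simp only [Finset.mem_add, Finset.mem_singleton]
  constructor
  · rintro ⟨y, hy, z, rfl, rfl⟩; simpa
  · intro h; exact ⟨x - d, h, d, rfl, by abel⟩

lemma card_add_single (B : Finset G) (d : G) : (B + {d}).card = B.card := by
  simp [Finset.add_singleton]

/-- Counting pairs fiberwise: ∑_{d ∈ S-B} |S ∩ (B+d)| = |S||B|. -/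
lemma sum_card_inter (S B : Finset G) :
    ∑ d ∈ S - B, (S ∩ (B + {d})).card = S.card * B.card := by
  classical
  rw [← Finset.card_product,
    Finset.card_eq_sum_card_fiberwise (f := fun p => p.1 - p.2) (t := S - B)
      (fun p hp => by
        rw [Finset.mem_coe, Finset.mem_product] at hp
        exact Finset.sub_mem_sub hp.1 hp.2)]
  refine Finset.sum_congr rfl fun d _ => ?_
  refine (Finset.card_bij (fun p _ => p.1) ?_ ?_ ?_).symm
  · intro p hp
    simp only [Finset.mem_filter, Finset.mem_product] at hp
    refine Finset.mem_inter.2 ⟨hp.1.1, mem_add_single.2 ?_⟩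
    have : p.1 - d = p.2 := by rw [← hp.2]; abel
    rw [this]; exact hp.1.2
  · intro p hp q hq h
    simp only [Finset.mem_filter, Finset.mem_product] at hp hq
    have : p.2 = q.2 := by
      have h1 := hp.2; have h2 := hq.2
      have : p.1 - p.2 = q.1 - q.2 := by rw [h1, h2]
      rw [h] at this
      exact (sub_right_injective this)
    exact Prod.ext h this
  · intro a ha
    rw [Finset.mem_inter] at ha
    refine ⟨(a, a - d), ?_, rfl⟩
    simp only [Finset.mem_filter, Finset.mem_product]
    exact ⟨⟨ha.1, mem_add_single.1 ha.2⟩, by abel⟩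

/-- Energy fiberwise: addE A B = ∑_{d ∈ A-B} |A ∩ (B+d)|². -/
lemma addE_eq_sum (A B : Finset G) :
    addE A B = ∑ d ∈ A - B, (A ∩ (B + {d})).card ^ 2 := by
  classical
  unfold addE
  rw [Finset.card_eq_sum_card_fiberwise (f := fun q => q.1.1 - q.2.1) (t := A - B)
      (fun q hq => by
        simp only [Finset.mem_coe, Finset.mem_filter, Finset.mem_product] at hq
        exact Finset.sub_mem_sub hq.1.1.1 hq.1.2.1)]
  refine Finset.sum_congr rfl fun d _ => ?_
  rw [sq, ← Finset.card_product]
  refine Finset.card_bij (fun q _ => (q.1.1, q.1.2)) ?_ ?_ ?_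
  · intro q hq
    simp only [Finset.mem_filter, Finset.mem_product] at hq
    obtain ⟨⟨⟨⟨ha1, ha2⟩, hb1, hb2⟩, hfil⟩, hfib⟩ := hq
    refine Finset.mem_product.2 ⟨Finset.mem_inter.2 ⟨ha1, mem_add_single.2 ?_⟩,
      Finset.mem_inter.2 ⟨ha2, mem_add_single.2 ?_⟩⟩
    · have : q.1.1 - d = q.2.1 := by rw [← hfib]; abel
      rw [this]; exact hb1
    · have hd2 : q.1.2 - q.2.2 = d := by rw [← hfil]; exact hfib
      have h2 : q.1.2 - d = q.2.2 := by rw [← hd2]; abel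
      rw [h2]; exact hb2
  · intro p hp q hq h
    simp only [Finset.mem_filter, Finset.mem_product] at hp hq
    have h1 : p.1 = q.1 := Prod.ext (congrArg Prod.fst h) (congrArg Prod.snd h)
    have hfp := hp.2; have hfq := hq.2
    have hb1 : p.2.1 = q.2.1 := by
      have : p.1.1 - p.2.1 = q.1.1 - q.2.1 := by rw [hfp, hfq]
      rw [h1] at this; exact sub_right_injective this
    have hb2 : p.2.2 = q.2.2 := by
      have : p.1.2 - p.2.2 = q.1.2 - q.2.2 := by
        rw [← hp.1.2, ← hq.1.2, hfp, hfq]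
      rw [h1] at this; exact sub_right_injective this
    exact Prod.ext h1 (Prod.ext hb1 hb2)
  · intro p hp
    rw [Finset.mem_product] at hp
    obtain ⟨h1, h2⟩ := hp
    rw [Finset.mem_inter] at h1 h2
    refine ⟨((p.1, p.2), (p.1 - d, p.2 - d)), ?_, rfl⟩
    simp only [Finset.mem_filter, Finset.mem_product]
    exact ⟨⟨⟨⟨h1.1, h2.1⟩, mem_add_single.1 h1.2, mem_add_single.1 h2.2⟩, by abel⟩, by abel⟩

/-- Greedy covering: a maximal X where each step covers ≥ t new elements. -/
lemma greedy_cover (A B : Finset G) (t : ℝ) (ht : 0 < t) :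
    ∃ X : Finset G, t * X.card ≤ ((A ∩ (B + X)).card : ℝ) ∧
      ∀ d : G, (((A ∩ (B + {d})) \ (B + X)).card : ℝ) < t := by
  classical
  set P : ℕ → Prop := fun n => ∃ X : Finset G,
    t * X.card ≤ ((A ∩ (B + X)).card : ℝ) ∧ (A ∩ (B + X)).card = n with hP
  set N : Finset ℕ := (Finset.range (A.card + 1)).filter P with hN
  have h0 : 0 ∈ N := by
    refine Finset.mem_filter.2 ⟨Finset.mem_range.2 (Nat.succ_pos _), ⟨∅, ?_, ?_⟩⟩ <;>
      simp
  obtain ⟨X, hX1, hX2⟩ := (Finset.mem_filter.1 (N.max'_mem ⟨0, h0⟩)).2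
  refine ⟨X, hX1, fun d => ?_⟩
  by_contra hcon
  push_neg at hcon
  have hd : d ∉ X := by
    intro hdX
    have hsub : B + {d} ⊆ B + X :=
      Finset.add_subset_add_left (Finset.singleton_subset_iff.2 hdX)
    have : ((A ∩ (B + {d})) \ (B + X)) = ∅ := by
      apply Finset.sdiff_eq_empty_iff_subset.2
      exact (Finset.inter_subset_right).trans hsub
    rw [this] at hcon; simp at hcon; linarith
  set X' := insert d X with hX'
  have hcard' : X'.card = X.card + 1 := Finset.card_insert_of_notMem hd
  have hBX' : B + X' = (B + X) ∪ (B + {d}) := by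
    rw [hX', Finset.insert_eq, Finset.add_union, Finset.union_comm]
  set U := A ∩ (B + X) with hU
  set W := (A ∩ (B + {d})) \ (B + X) with hW
  have hdisj : Disjoint U W := by
    apply Finset.disjoint_left.2
    intro x hx hxW
    rw [hW, Finset.mem_sdiff] at hxW
    exact hxW.2 (Finset.mem_inter.1 hx).2
  have hsub : U ∪ W ⊆ A ∩ (B + X') := by
    rw [hBX']
    intro x hx
    rcases Finset.mem_union.1 hx with h | h
    · rw [hU, Finset.mem_inter] at h
      exact Finset.mem_inter.2 ⟨h.1, Finset.mem_union_left _ h.2⟩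
    · rw [hW, Finset.mem_sdiff, Finset.mem_inter] at h
      exact Finset.mem_inter.2 ⟨h.1.1, Finset.mem_union_right _ h.1.2⟩
  have hcov : U.card + W.card ≤ (A ∩ (B + X')).card := by
    rw [← Finset.card_union_of_disjoint hdisj]
    exact Finset.card_le_card hsub
  have hWpos : 1 ≤ W.card := by
    by_contra h
    push_neg at h
    interval_cases hc : W.card <;> simp_all <;> linarith
  have hP' : t * X'.card ≤ ((A ∩ (B + X')).card : ℝ) := by
    rw [hcard']
    push_cast
    have h1 : (U.card : ℝ) + W.card ≤ (A ∩ (B + X')).card := by exact_mod_cast hcov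
    have h2 : t ≤ (W.card : ℝ) := hcon
    calc t * ((X.card : ℝ) + 1) = t * X.card + t := by ring
      _ ≤ (U.card : ℝ) + W.card := by exact add_le_add hX1 h2
      _ ≤ _ := h1
  have hmem : (A ∩ (B + X')).card ∈ N := by
    refine Finset.mem_filter.2 ⟨Finset.mem_range.2 ?_, ⟨X', hP', rfl⟩⟩
    exact Nat.lt_succ_of_le (Finset.card_le_card Finset.inter_subset_left)
  have hle := N.le_max' _ hmem
  have : (A ∩ (B + X')).card ≥ U.card + 1 := le_trans (by omega) hcov
  omega

end Aux

theorem stmt_5 {G : Type*} [AddCommGroup G] [DecidableEq G] (A B : Finset G)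
    (hB : B.Nonempty) (hAB : B.card ≤ A.card) (K : ℝ) (hK : 1 ≤ K)
    (hE : (addE A B : ℝ) = A.card * B.card ^ 2 / K) :
    ∃ X : Finset G,
      (A.card : ℝ) / (4 * K * B.card) ≤ X.card ∧
      (X.card : ℝ) ≤ 2 * K * A.card / B.card ∧
      (A.card : ℝ) / (4 * K) ≤ (A ∩ (B + X)).card := by
  classical
  have hK0 : (0 : ℝ) < K := lt_of_lt_of_le one_pos hK
  have hb0 : (0 : ℝ) < B.card := by exact_mod_cast hB.card_pos
  set t : ℝ := (B.card : ℝ) / (2 * K) with htdef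
  have ht : 0 < t := div_pos hb0 (by linarith)
  obtain ⟨X, hX1, hX2⟩ := greedy_cover A B t ht
  set C := A ∩ (B + X) with hC
  -- sum identities
  have hsum1 : ∑ d ∈ A - B, ((A ∩ (B + {d})).card : ℝ) = (A.card : ℝ) * B.card := by
    exact_mod_cast congrArg (Nat.cast : ℕ → ℝ) (sum_card_inter A B)
  have hsum2 : ∑ d ∈ A - B, ((A ∩ (B + {d})).card : ℝ) ^ 2
      = (A.card : ℝ) * B.card ^ 2 / K := by
    rw [← hE]
    exact_mod_cast (congrArg (Nat.cast : ℕ → ℝ) (addE_eq_sum A B)).symm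
  have hCA : C ⊆ A := Finset.inter_subset_left
  have hsum3 : ∑ d ∈ A - B, ((C ∩ (B + {d})).card : ℝ) = (C.card : ℝ) * B.card := by
    have hnat : ∑ d ∈ A - B, (C ∩ (B + {d})).card = C.card * B.card := by
      rw [← sum_card_inter C B]
      apply (Finset.sum_subset (Finset.sub_subset_sub_right hCA) ?_).symm
      intro d _ hd
      rw [Finset.card_eq_zero, Finset.eq_empty_iff_forall_notMem]
      intro x hx
      rw [Finset.mem_inter] at hx
      exact hd (Finset.mem_sub.2 ⟨x, hx.1, x - d, mem_add_single.1 hx.2, by abel⟩)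
    exact_mod_cast congrArg (Nat.cast : ℕ → ℝ) hnat
  -- pointwise bound: r² - t r ≤ b * m
  have hpt : ∀ d ∈ A - B,
      ((A ∩ (B + {d})).card : ℝ) ^ 2 - t * ((A ∩ (B + {d})).card : ℝ)
        ≤ (B.card : ℝ) * ((C ∩ (B + {d})).card : ℝ) := by
    intro d _
    have hsplitn : (C ∩ (B + {d})).card + ((A ∩ (B + {d})) \ (B + X)).card
        = (A ∩ (B + {d})).card := by
      have hset : C ∩ (B + {d}) = (A ∩ (B + {d})) ∩ (B + X) := by
        rw [hC]; ext x; simp only [Finset.mem_inter]; tauto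
      rw [hset]
      exact Finset.card_inter_add_card_sdiff (A ∩ (B + {d})) (B + X)
    have hsplit : ((C ∩ (B + {d})).card : ℝ) + (((A ∩ (B + {d})) \ (B + X)).card : ℝ)
        = ((A ∩ (B + {d})).card : ℝ) := by exact_mod_cast hsplitn
    have hwt : (((A ∩ (B + {d})) \ (B + X)).card : ℝ) < t := hX2 d
    have hr0 : (0 : ℝ) ≤ ((A ∩ (B + {d})).card : ℝ) := Nat.cast_nonneg _
    have hm0 : (0 : ℝ) ≤ ((C ∩ (B + {d})).card : ℝ) := Nat.cast_nonneg _
    have hrb : ((A ∩ (B + {d})).card : ℝ) ≤ (B.card : ℝ) := by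
      have h := Finset.card_le_card (Finset.inter_subset_right (s₁ := A) (s₂ := B + {d}))
      rw [card_add_single] at h
      exact_mod_cast h
    nlinarith [mul_le_mul_of_nonneg_left hwt.le hr0,
      mul_le_mul_of_nonneg_right hrb hm0]
  -- sum up
  have hmain : (A.card : ℝ) * B.card ^ 2 / K - t * ((A.card : ℝ) * B.card)
      ≤ (B.card : ℝ) * ((C.card : ℝ) * B.card) := by
    calc (A.card : ℝ) * B.card ^ 2 / K - t * ((A.card : ℝ) * B.card)
        = ∑ d ∈ A - B, (((A ∩ (B + {d})).card : ℝ) ^ 2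
            - t * ((A ∩ (B + {d})).card : ℝ)) := by
          rw [Finset.sum_sub_distrib, hsum2, ← Finset.mul_sum, hsum1]
      _ ≤ ∑ d ∈ A - B, (B.card : ℝ) * ((C ∩ (B + {d})).card : ℝ) :=
          Finset.sum_le_sum hpt
      _ = (B.card : ℝ) * ((C.card : ℝ) * B.card) := by rw [← Finset.mul_sum, hsum3]
  have h2K : (0 : ℝ) < 2 * K := by linarith
  have hb2 : (0 : ℝ) < (B.card : ℝ) ^ 2 := by positivity
  have hCbound : (A.card : ℝ) / (2 * K) ≤ (C.card : ℝ) := by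
    rw [htdef] at hmain
    rw [div_le_iff₀ h2K]
    have e : (A.card : ℝ) * B.card ^ 2 / K
        - (B.card : ℝ) / (2 * K) * ((A.card : ℝ) * B.card)
        = (A.card : ℝ) * B.card ^ 2 / (2 * K) := by
      field_simp
      ring
    have h1 : (A.card : ℝ) * B.card ^ 2 / (2 * K) ≤ (C.card : ℝ) * B.card ^ 2 := by
      rw [← e]
      calc (A.card : ℝ) * B.card ^ 2 / K - (B.card : ℝ) / (2 * K) * ((A.card : ℝ) * B.card)
          ≤ (B.card : ℝ) * ((C.card : ℝ) * B.card) := hmain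
        _ = (C.card : ℝ) * B.card ^ 2 := by ring
    rw [div_le_iff₀ h2K] at h1
    have h2 : (A.card : ℝ) * B.card ^ 2 ≤ ((C.card : ℝ) * (2 * K)) * B.card ^ 2 := by
      nlinarith
    exact le_of_mul_le_mul_right h2 hb2
  have hCX : (C.card : ℝ) ≤ (B.card : ℝ) * X.card := by
    have h1 : C.card ≤ (B + X).card := Finset.card_le_card Finset.inter_subset_right
    have h2 : (B + X).card ≤ B.card * X.card := Finset.card_add_le
    exact_mod_cast le_trans h1 h2
  have hCAcard : (C.card : ℝ) ≤ (A.card : ℝ) := by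
    exact_mod_cast Finset.card_le_card hCA
  refine ⟨X, ?_, ?_, ?_⟩
  · rw [div_le_iff₀ (by positivity : (0:ℝ) < 4 * K * B.card)]
    have h1 : (A.card : ℝ) ≤ (C.card : ℝ) * (2 * K) := (div_le_iff₀ h2K).1 hCbound
    have h2 : (C.card : ℝ) * (2 * K) ≤ ((B.card : ℝ) * X.card) * (2 * K) :=
      mul_le_mul_of_nonneg_right hCX h2K.le
    have h3 : (0:ℝ) ≤ K * (B.card : ℝ) * X.card := by positivity
    nlinarith
  · rw [le_div_iff₀ hb0]
    rw [htdef] at hX1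
    have h1 : (B.card : ℝ) * X.card ≤ 2 * K * (C.card : ℝ) := by
      have e : (B.card : ℝ) * X.card = (2 * K) * ((B.card : ℝ) / (2 * K) * X.card) := by
        field_simp
      rw [e]
      calc (2 * K) * ((B.card : ℝ) / (2 * K) * X.card)
          ≤ (2 * K) * (C.card : ℝ) := mul_le_mul_of_nonneg_left hX1 h2K.le
        _ = 2 * K * (C.card : ℝ) := by ring
    have h2 : 2 * K * (C.card : ℝ) ≤ 2 * K * (A.card : ℝ) :=
      mul_le_mul_of_nonneg_left hCAcard h2K.le
    linarith
  · have h1 : (A.card : ℝ) / (4 * K) ≤ (A.card : ℝ) / (2 * K) := by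
      apply div_le_div_of_nonneg_left (Nat.cast_nonneg _) h2K (by linarith)
    exact le_trans h1 hCbound
end

section
/- For a finite nonempty set A in an abelian group G and any real T ≥ 2, one has E_*[A] ≤ D[A], i.e., for every partition A = X ⊔ Y into disjoint sets one has |X|²|Y|² / (|A|·E(X,Y)) ≤ |A+A|/|A| (with the convention that the left side is interpreted as 0 when X or Y is empty). -/
/-
Since X, Y ⊆ A we have X + Y ⊆ A + A, and Cauchy–Schwarz over the representation counts of
X + Y gives |X|²|Y|² ≤ |X + Y| · E(X, Y) ≤ |A + A| · E(X, Y). Dividing by |A| · E(X, Y) is the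
claim; if E(X, Y) = 0 the left side is 0 by Lean's division convention.
-/

open Finset Pointwise

/-- Swapping `b₁` and `b₂` turns `a₁ - b₁ = a₂ - b₂` into `a₁ + b₂ = a₂ + b₁`. -/
lemma addE_eq_addEnergy {G : Type*} [AddCommGroup G] [DecidableEq G] (A B : Finset G) :
    addE A B = addEnergy A B := by
  let swapB : (G × G) × G × G → (G × G) × G × G := fun x => (x.1, x.2.swap)
  refine card_nbij' swapB swapB ?_ ?_ (fun _ _ => rfl) (fun _ _ => rfl)
  all_goals
    rintro ⟨⟨a₁, a₂⟩, b₁, b₂⟩ h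
    simp only [coe_filter, mem_product, Set.mem_ofPred_eq, swapB, Prod.swap] at h ⊢
    refine ⟨⟨h.1.1, h.1.2.2, h.1.2.1⟩, ?_⟩
  · exact sub_eq_sub_iff_add_eq_add.mp h.2
  · exact sub_eq_sub_iff_add_eq_add.mpr h.2

lemma card_sq_mul_card_sq_le_card_add_mul_addE {G : Type*} [AddCommGroup G] [DecidableEq G]
    {A X Y : Finset G} (hX : X ⊆ A) (hY : Y ⊆ A) :
    #X ^ 2 * #Y ^ 2 ≤ #(A + A) * addE X Y := by
  rw [addE_eq_addEnergy]
  calc #X ^ 2 * #Y ^ 2 ≤ #(X + Y) * addEnergy X Y := le_card_add_mul_addEnergy X Y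
    _ ≤ #(A + A) * addEnergy X Y := by gcongr

theorem stmt_6_general {G : Type*} [AddCommGroup G] [DecidableEq G] (A : Finset G) :
    ∀ X Y : Finset G, X ∪ Y = A → Disjoint X Y →
      ((X.card : ℝ) ^ 2 * Y.card ^ 2) / (A.card * addE X Y)
        ≤ ((A + A).card : ℝ) / A.card := by
  rintro X Y rfl -
  have hbound : ((#X : ℝ) ^ 2 * #Y ^ 2) ≤ #(X ∪ Y + (X ∪ Y)) * addE X Y := by
    exact_mod_cast card_sq_mul_card_sq_le_card_add_mul_addE subset_union_left subset_union_right
  rcases eq_or_ne (addE X Y : ℝ) 0 with hE | hE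
  · rw [hE, mul_zero, div_zero]
    positivity
  calc ((#X : ℝ) ^ 2 * #Y ^ 2) / (#(X ∪ Y) * addE X Y)
      ≤ (#(X ∪ Y + (X ∪ Y)) * addE X Y) / (#(X ∪ Y) * addE X Y) := by gcongr
    _ = #(X ∪ Y + (X ∪ Y)) / #(X ∪ Y) := mul_div_mul_right _ _ hE

theorem stmt_6 {G : Type*} [AddCommGroup G] [DecidableEq G] (A : Finset G)
    (hA : A.Nonempty) (T : ℝ) (hT : 2 ≤ T) :
    ∀ X Y : Finset G, X ∪ Y = A → Disjoint X Y →
      ((X.card : ℝ) ^ 2 * Y.card ^ 2) / (A.card * addE X Y)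
        ≤ ((A + A).card : ℝ) / A.card :=
  stmt_6_general A
end

section
/- Let A ⊆ G be a finite set, M ≥ 1 a real with the property that for every disjoint partition A = X ⊔ Y one has E(X,Y) ≥ |X|²|Y|²/(M|A|). Suppose A' ⊆ A satisfies |A'+A'| ≤ K|A'| and |A'| ≥ (1 − ε)|A| with ε = 1/(2⁶M). Then |A+A| = O(K⁴M²|A|). -/
set_option maxHeartbeats 1000000

open Finset Pointwise

namespace Stmt11Aux

variable {G : Type} [AddCommGroup G] [DecidableEq G]

/-- Number of representations of `d` as a difference of two elements of `A`. -/
def rr (A : Finset G) (d : G) : ℕ := ((A ×ˢ A).filter fun p => p.1 - p.2 = d).card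

lemma rr_neg (A : Finset G) (d : G) : rr A (-d) = rr A d := by
  unfold rr
  apply Finset.card_nbij' (fun p => (p.2, p.1)) (fun p => (p.2, p.1))
  · rintro ⟨a, b⟩ h
    simp only [mem_coe, mem_filter, mem_product] at h ⊢
    refine ⟨⟨h.1.2, h.1.1⟩, ?_⟩
    have h2 : b - a = -(a-b) := by abel
    rw [h2, h.2, neg_neg]
  · rintro ⟨a, b⟩ h
    simp only [mem_coe, mem_filter, mem_product] at h ⊢
    refine ⟨⟨h.1.2, h.1.1⟩, ?_⟩
    rw [← h.2]; abel
  · rintro ⟨a, b⟩ _; rfl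
  · rintro ⟨a, b⟩ _; rfl

lemma rr_zero (A : Finset G) : rr A 0 = A.card := by
  unfold rr
  rw [← Finset.card_image_of_injOn (f := Prod.fst)]
  · congr 1
    ext x
    simp only [mem_image, mem_filter, mem_product, sub_eq_zero]
    constructor
    · rintro ⟨p, ⟨⟨h1, h2⟩, h3⟩, rfl⟩; exact h1
    · intro hx; exact ⟨(x, x), ⟨⟨hx, hx⟩, rfl⟩, rfl⟩
  · intro p hp q hq h
    simp only [coe_filter, mem_product, sub_eq_zero, Set.mem_setOf_eq] at hp hq
    exact Prod.ext h (by rw [← hp.2, ← hq.2, h])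

lemma rr_pos_mem {A : Finset G} {d : G} (h : rr A d ≠ 0) : d ∈ A - A := by
  rw [rr, Finset.card_ne_zero] at h
  obtain ⟨p, hp⟩ := h
  simp only [mem_filter, mem_product] at hp
  exact hp.2 ▸ sub_mem_sub hp.1.1 hp.1.2

lemma addE_eq (X Y : Finset G) :
    addE X Y = ∑ p ∈ Y ×ˢ Y, rr X (p.1 - p.2) := by
  unfold addE
  rw [Finset.card_eq_sum_card_fiberwise (f := Prod.snd) (t := Y ×ˢ Y)
    (fun x hx => (mem_product.mp (mem_filter.mp hx).1).2)]
  refine Finset.sum_congr rfl fun p hp => ?_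
  unfold rr
  apply Finset.card_nbij' (fun x => x.1) (fun q => (q, p))
  · rintro ⟨⟨x1, x2⟩, y⟩ hx
    simp only [mem_coe, mem_filter, mem_product] at hx ⊢
    obtain ⟨⟨⟨h1, h2⟩, hd⟩, rfl⟩ := hx
    refine ⟨⟨h1.1, h1.2⟩, ?_⟩
    rw [sub_eq_sub_iff_sub_eq_sub]; exact hd
  · rintro ⟨q1, q2⟩ hq
    simp only [mem_coe, mem_filter, mem_product] at hq ⊢
    refine ⟨⟨⟨⟨hq.1.1, hq.1.2⟩, (mem_product.mp hp).1, (mem_product.mp hp).2⟩, ?_⟩, trivial⟩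
    rw [sub_eq_sub_iff_sub_eq_sub]; exact hq.2
  · rintro ⟨⟨x1, x2⟩, y⟩ hx
    simp only [mem_coe, mem_filter] at hx
    simp [← hx.2]
  · rintro ⟨q1, q2⟩ _; rfl

lemma rr_split {X A' B : Finset G} (hXB : X \ A' ⊆ B) (d : G) :
    rr X d ≤ rr A' d + 2 * B.card := by
  unfold rr
  have hsub : (X ×ˢ X).filter (fun p => p.1 - p.2 = d) ⊆
      ((A' ×ˢ A').filter (fun p => p.1 - p.2 = d)) ∪
      (((X \ A') ×ˢ X).filter (fun p => p.1 - p.2 = d)) ∪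
      ((X ×ˢ (X \ A')).filter (fun p => p.1 - p.2 = d)) := by
    rintro ⟨a, b⟩ hp
    simp only [mem_filter, mem_product, mem_union, mem_sdiff] at hp ⊢
    by_cases ha : a ∈ A'
    · by_cases hb : b ∈ A'
      · exact Or.inl (Or.inl ⟨⟨ha, hb⟩, hp.2⟩)
      · exact Or.inr ⟨⟨hp.1.1, hp.1.2, hb⟩, hp.2⟩
    · exact Or.inl (Or.inr ⟨⟨⟨hp.1.1, ha⟩, hp.1.2⟩, hp.2⟩)
  have h2 : (((X \ A') ×ˢ X).filter (fun p => p.1 - p.2 = d)).card ≤ B.card := by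
    apply Finset.card_le_card_of_injOn Prod.fst
    · rintro ⟨a, b⟩ hp
      simp only [mem_coe, mem_filter, mem_product] at hp
      exact hXB hp.1.1
    · rintro ⟨a, b⟩ ha ⟨c, e⟩ hc h
      simp only [coe_filter, mem_product, Set.mem_setOf_eq] at ha hc
      cases h
      have := ha.2.trans hc.2.symm
      exact Prod.ext rfl (sub_right_inj.mp this)
  have h3 : ((X ×ˢ (X \ A')).filter (fun p => p.1 - p.2 = d)).card ≤ B.card := by
    apply Finset.card_le_card_of_injOn Prod.snd
    · rintro ⟨a, b⟩ hp
      simp only [mem_coe, mem_filter, mem_product] at hp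
      exact hXB hp.1.2
    · rintro ⟨a, b⟩ ha ⟨c, e⟩ hc h
      simp only [coe_filter, mem_product, Set.mem_setOf_eq] at ha hc
      cases h
      have := ha.2.trans hc.2.symm
      exact Prod.ext (sub_left_inj.mp this) rfl
  calc ((X ×ˢ X).filter (fun p => p.1 - p.2 = d)).card
      ≤ _ := Finset.card_le_card hsub
    _ ≤ ((A' ×ˢ A').filter (fun p => p.1 - p.2 = d)).card +
        (((X \ A') ×ˢ X).filter (fun p => p.1 - p.2 = d)).card +
        ((X ×ˢ (X \ A')).filter (fun p => p.1 - p.2 = d)).card := by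
        refine (Finset.card_union_le _ _).trans ?_
        exact Nat.add_le_add_right (Finset.card_union_le _ _) _
    _ ≤ _ := by omega

lemma cover_lemma (D : Finset G) (hD0 : (0:G) ∈ D) (hDsym : ∀ d ∈ D, -d ∈ D) :
    ∀ S : Finset G, ∃ T ⊆ S,
      (∀ t₁ ∈ T, ∀ t₂ ∈ T, t₁ ≠ t₂ → t₁ - t₂ ∉ D) ∧ S ⊆ T + D := by
  intro S
  induction S using Finset.strongInductionOn with
  | _ S ih =>
    rcases S.eq_empty_or_nonempty with rfl | ⟨s, hs⟩
    · exact ⟨∅, Finset.Subset.refl _, by simp, by simp⟩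
    · set S' := S.filter (fun x => x - s ∉ D) with hS'
      have hsS' : s ∉ S' := by simp [hS', hD0]
      have hlt : S' ⊂ S := Finset.ssubset_iff_of_subset (Finset.filter_subset _ _) |>.mpr
        ⟨s, hs, hsS'⟩
      obtain ⟨T', hT'S, hind, hcov⟩ := ih S' hlt
      refine ⟨insert s T', ?_, ?_, ?_⟩
      · intro x hx
        rcases Finset.mem_insert.mp hx with rfl | hx
        · exact hs
        · exact (Finset.filter_subset _ _) (hT'S hx)
      · intro t₁ ht₁ t₂ ht₂ hne
        rcases Finset.mem_insert.mp ht₁ with h1 | h1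
        · rcases Finset.mem_insert.mp ht₂ with h2 | h2
          · exact absurd (h1.trans h2.symm) hne
          · subst h1
            intro hmem
            have hneg : t₂ - t₁ ∈ D := by simpa using hDsym _ hmem
            exact (Finset.mem_filter.mp (hT'S h2)).2 hneg
        · rcases Finset.mem_insert.mp ht₂ with h2 | h2
          · subst h2
            exact (Finset.mem_filter.mp (hT'S h1)).2
          · exact hind _ h1 _ h2 hne
      · intro x hx
        by_cases hxd : x - s ∈ D
        · have : x = s + (x - s) := by abel
          rw [this]
          exact Finset.add_mem_add (Finset.mem_insert_self _ _) hxd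
        · have : x ∈ S' := Finset.mem_filter.mpr ⟨hx, hxd⟩
          exact Finset.add_subset_add_right (Finset.subset_insert _ _) (hcov this)

lemma plu_real {A' : Finset G} (hA' : A'.Nonempty) {K : ℝ}
    (h : ((A' + A').card : ℝ) ≤ K * A'.card) (m n : ℕ) :
    ((m • A' - n • A').card : ℝ) ≤ K ^ (m + n) * A'.card := by
  have hq := Finset.pluennecke_ruzsa_inequality_nsmul_sub_nsmul_add hA' A' m n
  have hc : (0:ℝ) < A'.card := by exact_mod_cast hA'.card_pos
  have hq' : ((m • A' - n • A').card : ℝ) ≤ (((A' + A').card : ℝ) / A'.card) ^ (m + n) * A'.card := by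
    have := (NNRat.cast_le (K := ℝ)).mpr hq
    push_cast at this
    convert this using 3
  refine hq'.trans ?_
  have hb : ((A' + A').card : ℝ) / A'.card ≤ K := by
    rw [div_le_iff₀ hc]; exact h
  have hb0 : (0:ℝ) ≤ ((A' + A').card : ℝ) / A'.card := by positivity
  gcongr

lemma sub_add_sub_subset (A' : Finset G) :
    (A' - A') + (A' - A') ⊆ 2 • A' - 2 • A' := by
  intro x hx
  rw [Finset.mem_add] at hx
  obtain ⟨u, hu, v, hv, rfl⟩ := hx
  rw [Finset.mem_sub] at hu hv
  obtain ⟨a, ha, b, hb, rfl⟩ := hu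
  obtain ⟨c, hc, e, he, rfl⟩ := hv
  rw [Finset.mem_sub]
  refine ⟨a + c, ?_, b + e, ?_, by abel⟩ <;>
    (rw [two_nsmul]; exact Finset.add_mem_add ‹_› ‹_›)

lemma add_sub_subset (A' : Finset G) :
    A' + (A' - A') ⊆ 2 • A' - 1 • A' := by
  intro x hx
  rw [Finset.mem_add] at hx
  obtain ⟨u, hu, v, hv, rfl⟩ := hx
  rw [Finset.mem_sub] at hv
  obtain ⟨a, ha, b, hb, rfl⟩ := hv
  rw [Finset.mem_sub]
  exact ⟨u + a, by rw [two_nsmul]; exact Finset.add_mem_add hu ha,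
    b, by rwa [one_nsmul], by abel⟩

lemma indep_bound {A A' T : Finset G} {M : ℝ} (hM : 1 ≤ M) (hA : A.Nonempty)
    (hE : ∀ X Y : Finset G, X ∪ Y = A → Disjoint X Y →
      ((X.card : ℝ) ^ 2 * Y.card ^ 2) / (M * A.card) ≤ addE X Y)
    (hA'A : A' ⊆ A)
    (hA'big : (1 - 1 / (2 ^ 6 * M)) * A.card ≤ (A'.card : ℝ))
    (hTB : T ⊆ A \ A')
    (hind : ∀ t₁ ∈ T, ∀ t₂ ∈ T, t₁ ≠ t₂ → 16 * M * (rr A' (t₁ - t₂) : ℝ) ≤ A.card) :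
    (T.card : ℝ) ≤ 8 * M := by
  rcases T.eq_empty_or_nonempty with rfl | hT
  · simp only [Finset.card_empty, Nat.cast_zero]
    positivity
  set a : ℝ := (A.card : ℝ) with ha_def
  set t : ℝ := (T.card : ℝ) with ht_def
  set b : ℝ := ((A \ A').card : ℝ) with hb_def
  have hM0 : (0:ℝ) < M := lt_of_lt_of_le one_pos hM
  have ha1 : (1:ℝ) ≤ a := by rw [ha_def]; exact_mod_cast hA.card_pos
  have ht1 : (1:ℝ) ≤ t := by rw [ht_def]; exact_mod_cast hT.card_pos
  have hTA : T ⊆ A := hTB.trans (Finset.sdiff_subset)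
  set X : Finset G := A \ T with hX_def
  set x : ℝ := (X.card : ℝ) with hx_def
  have hA'X : A' ⊆ X := by
    intro y hy
    rw [hX_def, Finset.mem_sdiff]
    refine ⟨hA'A hy, fun hyT => ?_⟩
    exact (Finset.mem_sdiff.mp (hTB hyT)).2 hy
  have hA'le : (A'.card : ℝ) ≤ x := by rw [hx_def]; exact_mod_cast Finset.card_le_card hA'X
  have heps : 1 / (2^6 * M) ≤ 1/2 := by
    rw [div_le_div_iff₀ (by positivity) (by positivity)]
    nlinarith
  have hax : a / 2 ≤ x := by
    have h0 : (0:ℝ) ≤ a := by positivity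
    calc a/2 = (1 - 1/2) * a := by ring
      _ ≤ (1 - 1/(2^6*M)) * a := by nlinarith
      _ ≤ (A'.card : ℝ) := hA'big
      _ ≤ x := hA'le
  have hxa : x ≤ a := by
    rw [hx_def, ha_def]
    exact_mod_cast Finset.card_le_card (hX_def ▸ Finset.sdiff_subset)
  have hba : 64 * M * b ≤ a := by
    have hcard : b = a - A'.card := by
      rw [hb_def, ha_def]
      rw [Finset.card_sdiff_of_subset hA'A]
      push_cast [Finset.card_le_card hA'A]
      ring
    have : (1 - 1/(2^6*M)) * a ≤ (A'.card : ℝ) := hA'big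
    have h64 : b ≤ a / (64 * M) := by
      rw [hcard]
      have : a - A'.card ≤ a - (1 - 1/(2^6*M)) * a := by linarith
      calc a - (A'.card:ℝ) ≤ 1/(2^6*M) * a := by nlinarith
        _ = a / (64*M) := by norm_num; ring
    calc 64*M*b ≤ 64*M*(a/(64*M)) := by nlinarith
      _ = a := by field_simp
  have hunion : X ∪ T = A := Finset.sdiff_union_of_subset hTA
  have hdisj : Disjoint X T := Finset.sdiff_disjoint
  have hlow := hE X T hunion hdisj
  set c : ℝ := a / (16*M) + 2*b with hc_def
  have hc32 : 32 * M * c ≤ 3 * a := by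
    rw [hc_def]
    have : 32*M*(a/(16*M)) = 2*a := by field_simp; ring
    nlinarith
  have hup : (addE X T : ℝ) ≤ t * x + t * t * c := by
    rw [addE_eq]
    push_cast
    rw [← Finset.sum_filter_add_sum_filter_not (T ×ˢ T) (fun p => p.1 = p.2)]
    have hdiag : ∑ p ∈ (T ×ˢ T).filter (fun p => p.1 = p.2), ((rr X (p.1 - p.2) : ℝ)) ≤ t * x := by
      have hcard : (((T ×ˢ T).filter (fun p => p.1 = p.2)).card : ℝ) ≤ t := by
        rw [ht_def]
        exact_mod_cast Finset.card_le_card_of_injOn Prod.fst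
          (fun p hp => (Finset.mem_product.mp (Finset.mem_filter.mp hp).1).1)
          (fun p hp q hq h => by
            simp only [Finset.coe_filter, Set.mem_setOf_eq] at hp hq
            exact Prod.ext h (by rw [← hp.2, ← hq.2, h]))
      have hterm : ∀ p ∈ (T ×ˢ T).filter (fun p => p.1 = p.2),
          ((rr X (p.1 - p.2) : ℝ)) ≤ x := by
        intro p hp
        have : p.1 = p.2 := (Finset.mem_filter.mp hp).2
        rw [this, sub_self, rr_zero]
      calc _ ≤ (((T ×ˢ T).filter (fun p => p.1 = p.2)).card : ℝ) * x :=
            Finset.sum_le_card_nsmul _ _ x hterm |>.trans_eq (by rw [nsmul_eq_mul])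
        _ ≤ t * x := by
            have hx0 : (0:ℝ) ≤ x := by positivity
            nlinarith
    have hoff : ∑ p ∈ (T ×ˢ T).filter (fun p => ¬ p.1 = p.2), ((rr X (p.1 - p.2) : ℝ)) ≤
        t * t * c := by
      have hterm : ∀ p ∈ (T ×ˢ T).filter (fun p => ¬ p.1 = p.2),
          ((rr X (p.1 - p.2) : ℝ)) ≤ c := by
        intro p hp
        obtain ⟨hpp, hne⟩ := Finset.mem_filter.mp hp
        obtain ⟨h1, h2⟩ := Finset.mem_product.mp hpp
        have hd := hind _ h1 _ h2 hne
        have hsplit : rr X (p.1 - p.2) ≤ rr A' (p.1 - p.2) + 2 * (A \ A').card := by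
          apply rr_split
          intro y hy
          rw [Finset.mem_sdiff] at hy ⊢
          exact ⟨(Finset.mem_sdiff.mp hy.1).1, hy.2⟩
        have hsplit' : ((rr X (p.1 - p.2)):ℝ) ≤ (rr A' (p.1 - p.2) : ℝ) + 2 * b := by
          rw [hb_def]; exact_mod_cast hsplit
        have hrr : ((rr A' (p.1 - p.2)):ℝ) ≤ a / (16*M) := by
          rw [le_div_iff₀ (by positivity)]
          nlinarith
        rw [hc_def]; linarith
      calc _ ≤ ((((T ×ˢ T).filter (fun p => ¬ p.1 = p.2)).card : ℝ)) * c :=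
            Finset.sum_le_card_nsmul _ _ c hterm |>.trans_eq (by rw [nsmul_eq_mul])
        _ ≤ t * t * c := by
            have hcardn : ((T ×ˢ T).filter (fun p => ¬ p.1 = p.2)).card ≤ T.card * T.card := by
              refine le_trans (Finset.card_le_card (Finset.filter_subset _ _)) ?_
              rw [Finset.card_product]
            have hcard : (((T ×ˢ T).filter (fun p => ¬ p.1 = p.2)).card : ℝ) ≤ t * t := by
              rw [ht_def]; exact_mod_cast hcardn
            have hc0 : (0:ℝ) ≤ c := by
              rw [hc_def]
              have : (0:ℝ) ≤ b := by rw [hb_def]; positivity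
              positivity
            nlinarith
    linarith
  have hMa : (0:ℝ) < M * a := by positivity
  rw [div_le_iff₀ hMa] at hlow
  have hkey : x^2 * t^2 ≤ (t*x + t*t*c) * (M*a) := by
    calc x^2 * t^2 = (x:ℝ)^2 * t^2 := rfl
      _ ≤ (addE X T : ℝ) * (M*a) := hlow
      _ ≤ (t*x + t*t*c) * (M*a) := by nlinarith
  have hx2 : (a/2)^2 ≤ x^2 := by
    have h0 : (0:ℝ) ≤ a/2 := by positivity
    exact pow_le_pow_left₀ h0 hax 2
  have h1 : (a/2)^2*t^2 ≤ (t*x + t*t*c)*(M*a) :=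
    le_trans (mul_le_mul_of_nonneg_right hx2 (sq_nonneg t)) hkey
  have h2 : M*a*t*x ≤ M*a*t*a := mul_le_mul_of_nonneg_left hxa (by positivity)
  have hct : (0:ℝ) ≤ a*t*t := by positivity
  have h3 : (32*M*c)*(a*t*t) ≤ (3*a)*(a*t*t) := mul_le_mul_of_nonneg_right hc32 hct
  have hpos : (0:ℝ) < a*a*t := by positivity
  nlinarith [h1, h2, h3, hpos, ha1, ht1, hM0]

end Stmt11Aux

open Stmt11Aux

theorem stmt_11 :
    ∃ C : ℝ, 0 < C ∧
      ∀ (G : Type) (_ : AddCommGroup G) (_ : DecidableEq G) (A A' : Finset G)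
        (K M : ℝ), A.Nonempty → 1 ≤ K → 1 ≤ M →
        (∀ X Y : Finset G, X ∪ Y = A → Disjoint X Y →
          ((X.card : ℝ) ^ 2 * Y.card ^ 2) / (M * A.card) ≤ addE X Y) →
        A' ⊆ A → ((A' + A').card : ℝ) ≤ K * A'.card →
        (1 - 1 / (2 ^ 6 * M)) * A.card ≤ (A'.card : ℝ) →
        ((A + A).card : ℝ) ≤ C * K ^ 4 * M ^ 2 * A.card := by
  refine ⟨100, by norm_num, ?_⟩
  intro G _ _ A A' K M hA hK hM hE hA'A hdouble hA'big
  classical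
  have hM0 : (0:ℝ) < M := lt_of_lt_of_le one_pos hM
  have hK0 : (0:ℝ) < K := lt_of_lt_of_le one_pos hK
  have ha1 : (1:ℝ) ≤ A.card := by exact_mod_cast hA.card_pos
  -- A' is nonempty
  have hA'big2 : (A.card : ℝ) / 2 ≤ A'.card := by
    have heps : 1 / (2^6 * M) ≤ 1/2 := by
      rw [div_le_div_iff₀ (by positivity) (by positivity)]
      nlinarith
    have h0 : (0:ℝ) ≤ (A.card : ℝ) := by positivity
    calc (A.card : ℝ)/2 = (1 - 1/2) * A.card := by ring
      _ ≤ (1 - 1/(2^6*M)) * A.card := by nlinarith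
      _ ≤ A'.card := hA'big
  have hA' : A'.Nonempty := by
    rw [← Finset.card_pos]
    have h0 : (0:ℝ) < (A'.card : ℝ) := lt_of_lt_of_le (by linarith) hA'big2
    exact_mod_cast h0
  -- the set of popular differences
  set D : Finset G := (A' - A').filter (fun d => (A.card : ℝ) ≤ 16 * M * (rr A' d : ℝ))
    with hD_def
  have hDsub : D ⊆ A' - A' := Finset.filter_subset _ _
  have hD0 : (0:G) ∈ D := by
    obtain ⟨a0, ha0⟩ := hA'
    rw [hD_def, Finset.mem_filter]
    constructor
    · rw [Finset.mem_sub]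
      exact ⟨a0, ha0, a0, ha0, sub_self a0⟩
    · rw [rr_zero]
      nlinarith [hA'big2]
  have hDsym : ∀ d ∈ D, -d ∈ D := by
    intro d hd
    rw [hD_def, Finset.mem_filter] at hd ⊢
    constructor
    · rw [Finset.mem_sub] at hd ⊢
      obtain ⟨u, hu, v, hv, rfl⟩ := hd.1
      exact ⟨v, hv, u, hu, by abel⟩
    · rw [rr_neg]; exact hd.2
  -- cover B = A \ A' by translates of D
  obtain ⟨T, hTB, hTind, hTcov⟩ := cover_lemma D hD0 hDsym (A \ A')
  -- T is small
  have hTcard : (T.card : ℝ) ≤ 8 * M := by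
    apply indep_bound hM hA hE hA'A hA'big hTB
    intro t₁ ht₁ t₂ ht₂ hne
    by_contra hcon
    push_neg at hcon
    have hrrne : rr A' (t₁ - t₂) ≠ 0 := by
      intro h0
      rw [h0] at hcon
      push_cast at hcon
      nlinarith
    apply hTind t₁ ht₁ t₂ ht₂ hne
    rw [hD_def, Finset.mem_filter]
    exact ⟨rr_pos_mem hrrne, le_of_lt hcon⟩
  -- A ⊆ A' ∪ (T + D)
  have hAsub : A ⊆ A' ∪ (T + D) := by
    intro y hy
    by_cases hy' : y ∈ A'
    · exact Finset.mem_union_left _ hy'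
    · exact Finset.mem_union_right _ (hTcov (Finset.mem_sdiff.mpr ⟨hy, hy'⟩))
  -- sumset bounds
  have hc3 : ((A' + D).card : ℝ) ≤ K^3 * A'.card := by
    have hsub : A' + D ⊆ 2 • A' - 1 • A' :=
      (Finset.add_subset_add_left hDsub).trans (add_sub_subset A')
    calc ((A' + D).card : ℝ) ≤ ((2 • A' - 1 • A').card : ℝ) := by
          exact_mod_cast Finset.card_le_card hsub
      _ ≤ K^(2+1) * A'.card := plu_real hA' hdouble 2 1
      _ = K^3 * A'.card := by norm_num
  have hc4 : ((D + D).card : ℝ) ≤ K^4 * A'.card := by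
    have hsub : D + D ⊆ 2 • A' - 2 • A' :=
      (Finset.add_subset_add hDsub hDsub).trans (sub_add_sub_subset A')
    calc ((D + D).card : ℝ) ≤ ((2 • A' - 2 • A').card : ℝ) := by
          exact_mod_cast Finset.card_le_card hsub
      _ ≤ K^(2+2) * A'.card := plu_real hA' hdouble 2 2
      _ = K^4 * A'.card := by norm_num
  -- decompose A + A
  have hmain : A + A ⊆ (A' + A') ∪ ((A' + (T + D)) ∪ (((T + D) + A') ∪ ((T + D) + (T + D)))) := by
    refine (Finset.add_subset_add hAsub hAsub).trans ?_
    rw [Finset.union_add, Finset.add_union, Finset.add_union]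
    intro y hy
    simp only [Finset.mem_union] at hy ⊢
    tauto
  have hcard : ((A + A).card : ℝ) ≤ ((A' + A').card : ℝ) + (A' + (T + D)).card
      + ((T + D) + A').card + ((T + D) + (T + D)).card := by
    have h1 := Finset.card_le_card hmain
    have h2 := Finset.card_union_le (A' + A') ((A' + (T + D)) ∪ (((T + D) + A') ∪ ((T + D) + (T + D))))
    have h3 := Finset.card_union_le (A' + (T + D)) (((T + D) + A') ∪ ((T + D) + (T + D)))
    have h4 := Finset.card_union_le ((T + D) + A') ((T + D) + (T + D))
    have hn : (A + A).card ≤ (A' + A').card + (A' + (T + D)).card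
        + ((T + D) + A').card + ((T + D) + (T + D)).card := by omega
    exact_mod_cast hn
  -- bound each term
  have hA'a : (A'.card : ℝ) ≤ A.card := by exact_mod_cast Finset.card_le_card hA'A
  have hT0 : (0:ℝ) ≤ (T.card : ℝ) := by positivity
  have ht1 : ((A' + A').card : ℝ) ≤ K * A'.card := hdouble
  have ht2 : ((A' + (T + D)).card : ℝ) ≤ 8 * M * (K^3 * A'.card) := by
    have he : A' + (T + D) = T + (A' + D) := by
      rw [← add_assoc, add_comm A' T, add_assoc]
    rw [he]
    calc ((T + (A' + D)).card : ℝ) ≤ (T.card : ℝ) * (A' + D).card := by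
          exact_mod_cast Finset.card_add_le
      _ ≤ 8 * M * ((A' + D).card : ℝ) :=
          mul_le_mul_of_nonneg_right hTcard (by positivity)
      _ ≤ 8 * M * (K^3 * A'.card) :=
          mul_le_mul_of_nonneg_left hc3 (by positivity)
  have ht3 : (((T + D) + A').card : ℝ) ≤ 8 * M * (K^3 * A'.card) := by
    rw [add_comm (T + D) A']
    exact ht2
  have ht4 : (((T + D) + (T + D)).card : ℝ) ≤ (8*M) * (8*M) * (K^4 * A'.card) := by
    have he : (T + D) + (T + D) = (T + T) + (D + D) := by
      rw [add_assoc, ← add_assoc D T D, add_comm D T, add_assoc, ← add_assoc]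
    rw [he]
    calc (((T + T) + (D + D)).card : ℝ) ≤ ((T + T).card : ℝ) * (D + D).card := by
          exact_mod_cast Finset.card_add_le
      _ ≤ ((T.card : ℝ) * T.card) * (D + D).card := by
          refine mul_le_mul_of_nonneg_right ?_ (by positivity)
          exact_mod_cast Finset.card_add_le
      _ ≤ ((8*M) * (8*M)) * (D + D).card := by
          refine mul_le_mul_of_nonneg_right ?_ (by positivity)
          exact mul_le_mul hTcard hTcard hT0 (by positivity)
      _ ≤ (8*M) * (8*M) * (K^4 * A'.card) :=
          mul_le_mul_of_nonneg_left hc4 (by positivity)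
  -- final arithmetic
  have hK41 : (1:ℝ) ≤ K^4 := one_le_pow₀ hK
  have hM21 : (1:ℝ) ≤ M^2 := one_le_pow₀ hM
  have hKM : (1:ℝ) ≤ K^4 * M^2 := by nlinarith
  have hK4 : K ≤ K^4 := by
    calc K = K^1 := (pow_one K).symm
      _ ≤ K^4 := pow_le_pow_right₀ hK (by norm_num)
  have hK34 : K^3 ≤ K^4 := pow_le_pow_right₀ hK (by norm_num)
  have hA0 : (0:ℝ) ≤ (A.card : ℝ) := by positivity
  calc ((A + A).card : ℝ)
      ≤ ((A' + A').card : ℝ) + (A' + (T + D)).card + ((T + D) + A').card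
        + ((T + D) + (T + D)).card := hcard
    _ ≤ K * A'.card + 8 * M * (K^3 * A'.card) + 8 * M * (K^3 * A'.card)
        + (8*M) * (8*M) * (K^4 * A'.card) := by linarith
    _ ≤ 100 * K ^ 4 * M ^ 2 * A'.card := by
        have hs0 : (0:ℝ) ≤ (A'.card : ℝ) := by positivity
        have hMM : M ≤ M^2 := by nlinarith
        have hKK : K ≤ K^4*M^2 := by
          nlinarith [mul_nonneg (by linarith : (0:ℝ) ≤ K^4) (by linarith : (0:ℝ) ≤ M^2 - 1)]
        have e1 : M*K^3 ≤ M^2*K^4 := mul_le_mul hMM hK34 (by positivity) (by nlinarith)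
        nlinarith [mul_le_mul_of_nonneg_right hKK hs0, mul_le_mul_of_nonneg_right e1 hs0]
    _ ≤ 100 * K ^ 4 * M ^ 2 * A.card := by
        refine mul_le_mul_of_nonneg_left hA'a ?_
        positivity
end
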